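/- arXiv:0809.1386 — 4 statements merged into one kernel-verified Lean document; each statement's English description precedes it below -/
import Mathlib

section
/- (Amer–Brumer) Let F be a field of characteristic different from 2 and let f and g be two quadratic forms (homogeneous polynomials of degree 2) in the same n variables over F. Then the quadratic form f + t·g over the rational function field F(t) has a nontrivial zero in F(t)ⁿ if and only if f and g have a common nontrivial zero in Fⁿ. -/
/-!
Clearing denominators, it suffices to find a common zero of `f` and `g` from a nonzero zero
`p ∈ R[t]ⁿ` of the pencil `h = f + t g`, by descent on the degree `d` of `p`. Let `a` be the
coefficient of `t^d` in `p`. The coefficient of `t^(2d+1)` in `h(p)` is `g(a)`, so `g(a) = 0`.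
If moreover `f(a) ≠ 0`, then `h(a) = f(a)` is a nonzero constant, and the scaled reflection
`q = h(a) p - B_h(p, a) a` of `p` in `a` is again a nonzero zero of `h`. Expanding
`h(p - t^d a) = -t^d B_h(p, a) + t^(2d) f(a)`, whose left side has degree `< 2d`, shows that
`B_h(p, a) = f(a) t^d + (lower terms)`, so the `t^d`-coefficients in `q` cancel and `deg q < d`.
-/

open MvPolynomial
open scoped Polynomial

namespace QuadraticMap

variable {S M : Type*} [CommRing S] [AddCommGroup M] [Module S M]

theorem map_sub_smul (Q : QuadraticMap S M S) (v w : M) (t : S) :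
    Q (v - t • w) = Q v - t * polar Q v w + t ^ 2 * Q w := by
  rw [sub_eq_add_neg, QuadraticMap.map_add (⇑Q), ← neg_smul, QuadraticMap.map_smul,
    polar_smul_right]
  simp only [smul_eq_mul]
  ring

/-- `Q w • v - polar Q v w • w` is `Q w` times the reflection of `v` in `w`. -/
theorem map_smul_sub_polar_smul {Q : QuadraticMap S M S} {v : M} (hv : Q v = 0) (w : M) :
    Q (Q w • v - polar Q v w • w) = 0 := by
  rw [map_sub_smul, QuadraticMap.map_smul, polar_smul_left, hv]
  simp only [smul_eq_mul]
  ring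

theorem smul_sub_polar_smul_ne_zero [IsDomain S] [NoZeroSMulDivisors S M]
    {Q : QuadraticMap S M S} {v w : M} (hv : Q v = 0) (hv0 : v ≠ 0) (hw : Q w ≠ 0) :
    Q w • v - polar Q v w • w ≠ 0 := by
  intro h
  have hvw : Q w • v = polar Q v w • w := sub_eq_zero.mp h
  have hpolar : polar Q v w = 0 := by
    have := congrArg Q hvw
    rw [QuadraticMap.map_smul, QuadraticMap.map_smul, hv, smul_zero, smul_eq_mul] at this
    simpa [hw] using this.symm
  rw [hpolar, zero_smul, smul_eq_zero] at hvw
  exact hvw.elim hw hv0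

end QuadraticMap

theorem Finsupp.exists_eq_single_add_single_of_degree_eq_two {σ : Type*} {m : σ →₀ ℕ}
    (hm : m.degree = 2) : ∃ i j : σ, m = Finsupp.single i 1 + Finsupp.single j 1 := by
  classical
  have hcard : Multiset.card (Finsupp.toMultiset m) = 2 := by
    rw [Finsupp.card_toMultiset]
    simpa [Finsupp.degree_apply, Finsupp.sum] using hm
  obtain ⟨i, j, hij⟩ := Multiset.card_eq_two.mp hcard
  refine ⟨i, j, ?_⟩
  rw [← Multiset.toFinsupp_eq_iff.mpr hij.symm, Multiset.insert_eq_cons, ← Multiset.singleton_add,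
    Multiset.toFinsupp_add, Multiset.toFinsupp_singleton, Multiset.toFinsupp_singleton]

namespace MvPolynomial

variable {σ R : Type*} [CommRing R]

theorem IsHomogeneous.induction_on_two {motive : MvPolynomial σ R → Prop} (zero : motive 0)
    (add : ∀ f g, motive f → motive g → motive (f + g))
    (monomial : ∀ (c : R) (i j : σ), motive (C c * X i * X j))
    {f : MvPolynomial σ R} (hf : f.IsHomogeneous 2) : motive f := by
  rw [← f.support_sum_monomial_coeff]
  refine Finset.sum_induction _ motive add zero fun m hm => ?_
  have hdeg : m.degree = 2 := by
    rw [Finsupp.degree_eq_weight_one]; exact hf (mem_support_iff.mp hm)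
  obtain ⟨i, j, rfl⟩ := Finsupp.exists_eq_single_add_single_of_degree_eq_two hdeg
  convert monomial (f.coeff (Finsupp.single i 1 + Finsupp.single j 1)) i j using 1
  simp only [X, C_mul_monomial, monomial_mul, mul_one]

theorem IsHomogeneous.exists_quadraticMap {f : MvPolynomial σ R} (hf : f.IsHomogeneous 2) :
    ∃ Q : QuadraticMap R (σ → R) R, ⇑Q = fun x => eval x f :=
  hf.induction_on_two (motive := fun f => ∃ Q : QuadraticMap R (σ → R) R, ⇑Q = fun x => eval x f)
    ⟨0, by ext; simp⟩
    (fun _ _ ⟨Q, hQ⟩ ⟨Q', hQ'⟩ => ⟨Q + Q', by ext; simp [hQ, hQ']⟩)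
    fun c i j => ⟨c • QuadraticMap.proj i j, by ext; simp [mul_assoc]⟩

noncomputable def IsHomogeneous.toQuadraticMap {f : MvPolynomial σ R} (hf : f.IsHomogeneous 2) :
    QuadraticMap R (σ → R) R where
  toFun x := eval x f
  toFun_smul a x := by
    obtain ⟨Q, hQ⟩ := hf.exists_quadraticMap
    simpa only [hQ] using Q.map_smul a x
  exists_companion' := by
    obtain ⟨Q, hQ⟩ := hf.exists_quadraticMap
    simpa only [hQ] using Q.exists_companion

@[simp]
theorem IsHomogeneous.toQuadraticMap_apply {f : MvPolynomial σ R} (hf : f.IsHomogeneous 2)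
    (x : σ → R) : hf.toQuadraticMap x = eval x f :=
  rfl

theorem eval_comp_map {S : Type*} [CommRing S] (φ : R →+* S) (a : σ → R) (f : MvPolynomial σ R) :
    eval (φ ∘ a) (map φ f) = φ (eval a f) := by
  rw [eval_map, ← eval₂_id, eval₂_comp_left, RingHom.comp_id]

theorem IsHomogeneous.exists_eval_map_algebraMap_eq_zero_iff {A K : Type*} [CommRing A]
    [IsDomain A] [Field K] [Algebra A K] [IsFractionRing A K] [Finite σ] {f : MvPolynomial σ A}
    (hf : f.IsHomogeneous 2) :
    (∃ x : σ → K, x ≠ 0 ∧ eval x (map (algebraMap A K) f) = 0) ↔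
      ∃ p : σ → A, p ≠ 0 ∧ eval p f = 0 := by
  have hinj := IsFractionRing.injective A K
  refine ⟨fun ⟨x, hx0, hxz⟩ => ?_, fun ⟨p, hp0, hpz⟩ => ⟨algebraMap A K ∘ p, ?_, ?_⟩⟩
  · obtain ⟨b, hb⟩ := IsLocalization.exist_integer_multiples_of_finite (nonZeroDivisors A) x
    choose p hp using hb
    have hpx : algebraMap A K ∘ p = algebraMap A K b • x := by
      ext i
      simp [hp i, Algebra.smul_def]
    have hb0 : algebraMap A K b ≠ 0 :=
      (map_ne_zero_iff _ hinj).mpr (nonZeroDivisors.coe_ne_zero b)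
    refine ⟨p, fun h => hx0 ?_, hinj ?_⟩
    · simpa [h, hb0] using hpx.symm
    · rw [← eval_comp_map, hpx, map_zero, ← (hf.map _).toQuadraticMap_apply,
        QuadraticMap.map_smul, IsHomogeneous.toQuadraticMap_apply, hxz, smul_zero]
  · exact fun h => hp0 (by ext i; exact hinj (by simpa using congrFun h i))
  · rw [eval_comp_map, hpz, map_zero]

section PolynomialPoints

variable {f : MvPolynomial σ R} {p : σ → R[X]} {m : ℕ}

theorem IsHomogeneous.natDegree_eval_map_C_le (hf : f.IsHomogeneous 2)
    (hp : ∀ i, (p i).natDegree ≤ m) : (eval p (map Polynomial.C f)).natDegree ≤ 2 * m := by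
  refine hf.induction_on_two (motive := fun f => (eval p (map Polynomial.C f)).natDegree ≤ 2 * m)
    (by simp) (fun f g hf hg => ?_) fun c i j => ?_
  · rw [map_add, map_add]
    exact Polynomial.natDegree_add_le_of_degree_le hf hg
  · simp only [map_mul, map_C, map_X, eval_C, eval_X, mul_assoc, two_mul]
    exact (Polynomial.natDegree_C_mul_le _ _).trans
      (Polynomial.natDegree_mul_le_of_le (hp i) (hp j))

theorem IsHomogeneous.coeff_eval_map_C_two_mul (hf : f.IsHomogeneous 2)
    (hp : ∀ i, (p i).natDegree ≤ m) :
    (eval p (map Polynomial.C f)).coeff (2 * m) = eval (fun i => (p i).coeff m) f := by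
  refine hf.induction_on_two
    (motive := fun f =>
      (eval p (map Polynomial.C f)).coeff (2 * m) = eval (fun i => (p i).coeff m) f)
    (by simp) (fun f g hf hg => by simp only [map_add, Polynomial.coeff_add, hf, hg])
    fun c i j => ?_
  simp [mul_assoc, Polynomial.coeff_C_mul, two_mul,
    Polynomial.coeff_mul_add_eq_of_natDegree_le (hp i) (hp j)]

end PolynomialPoints

section Pencil

variable {f g : MvPolynomial σ R}

noncomputable def pencil (f g : MvPolynomial σ R) : MvPolynomial σ R[X] :=
  map Polynomial.C f + C Polynomial.X * map Polynomial.C g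

theorem IsHomogeneous.pencil (hf : f.IsHomogeneous 2) (hg : g.IsHomogeneous 2) :
    (pencil f g).IsHomogeneous 2 :=
  (hf.map _).add ((hg.map _).C_mul _)

theorem eval_pencil (p : σ → R[X]) :
    eval p (pencil f g) =
      eval p (map Polynomial.C f) + Polynomial.X * eval p (map Polynomial.C g) := by
  simp [pencil]

theorem eval_C_comp_pencil (a : σ → R) :
    eval (Polynomial.C ∘ a) (pencil f g) =
      Polynomial.C (eval a f) + Polynomial.X * Polynomial.C (eval a g) := by
  rw [eval_pencil, eval_comp_map, eval_comp_map]

variable {p : σ → R[X]} {m : ℕ}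

theorem natDegree_eval_pencil_le (hf : f.IsHomogeneous 2) (hg : g.IsHomogeneous 2)
    (hp : ∀ i, (p i).natDegree ≤ m) : (eval p (pencil f g)).natDegree ≤ 2 * m + 1 := by
  rw [eval_pencil]
  refine Polynomial.natDegree_add_le_of_degree_le ((hf.natDegree_eval_map_C_le hp).trans
    (Nat.le_succ _)) ?_
  calc (Polynomial.X * eval p (map Polynomial.C g)).natDegree
      ≤ (Polynomial.X : R[X]).natDegree + (eval p (map Polynomial.C g)).natDegree :=
        Polynomial.natDegree_mul_le
    _ ≤ 1 + 2 * m := add_le_add Polynomial.natDegree_X_le (hg.natDegree_eval_map_C_le hp)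
    _ = 2 * m + 1 := add_comm _ _

theorem coeff_eval_pencil_two_mul_add_one (hf : f.IsHomogeneous 2) (hg : g.IsHomogeneous 2)
    (hp : ∀ i, (p i).natDegree ≤ m) :
    (eval p (pencil f g)).coeff (2 * m + 1) = eval (fun i => (p i).coeff m) g := by
  rw [eval_pencil, Polynomial.coeff_add, Polynomial.coeff_X_mul, hg.coeff_eval_map_C_two_mul hp,
    Polynomial.coeff_eq_zero_of_natDegree_lt
      ((hf.natDegree_eval_map_C_le hp).trans_lt (Nat.lt_succ_self _)), zero_add]

theorem coeff_polar_pencil (hf : f.IsHomogeneous 2) (hg : g.IsHomogeneous 2)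
    {Q : QuadraticMap R[X] (σ → R[X]) R[X]} (hQ : ∀ x, Q x = eval x (pencil f g))
    {d : ℕ} (hp : ∀ i, (p i).natDegree ≤ d + 1) (hpz : Q p = 0)
    {a : σ → R} (ha : ∀ i, (p i).coeff (d + 1) = a i) (hga : eval a g = 0)
    {k : ℕ} (hk : d + 1 ≤ k) :
    (QuadraticMap.polar Q p (Polynomial.C ∘ a)).coeff k =
      if k = d + 1 then eval a f else 0 := by
  set p' : σ → R[X] := p - (Polynomial.X ^ (d + 1) : R[X]) • (Polynomial.C ∘ a)
  have hlow : ∀ i, (p' i).natDegree ≤ d := fun i => by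
    refine Polynomial.natDegree_le_iff_coeff_eq_zero.mpr fun N hN => ?_
    simp only [p', Pi.sub_apply, Pi.smul_apply, Function.comp_apply, smul_eq_mul,
      Polynomial.coeff_sub, Polynomial.coeff_X_pow_mul', Polynomial.coeff_C]
    rcases (Nat.succ_le_of_lt hN).eq_or_lt with rfl | hN'
    · simp [ha]
    · simp [Polynomial.coeff_eq_zero_of_natDegree_lt ((hp i).trans_lt hN'), Nat.sub_eq_zero_iff_le,
        hN'.not_ge]
  have key : eval p' (pencil f g) = Polynomial.C (eval a f) * Polynomial.X ^ (2 * d + 2)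
      - QuadraticMap.polar Q p (Polynomial.C ∘ a) * Polynomial.X ^ (d + 1) := by
    rw [← hQ, Q.map_sub_smul, hpz, hQ, eval_C_comp_pencil, hga, map_zero]
    ring
  have hcoeff := congrArg (Polynomial.coeff · (k + (d + 1))) key
  rw [Polynomial.coeff_eq_zero_of_natDegree_lt ((natDegree_eval_pencil_le hf hg hlow).trans_lt
      (by omega))] at hcoeff
  simp only [Polynomial.coeff_sub, Polynomial.coeff_mul_X_pow, Polynomial.coeff_C_mul_X_pow]
    at hcoeff
  split_ifs at hcoeff ⊢ <;> first | omega | linear_combination hcoeff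

variable [IsDomain R]

theorem exists_common_zero_or_lower_degree_zero (hf : f.IsHomogeneous 2)
    (hg : g.IsHomogeneous 2) {d : ℕ} (hp0 : p ≠ 0) (hp : ∀ i, (p i).natDegree ≤ d + 1)
    (hpz : eval p (pencil f g) = 0) :
    (∃ y : σ → R, y ≠ 0 ∧ eval y f = 0 ∧ eval y g = 0) ∨
      ∃ q : σ → R[X], q ≠ 0 ∧ (∀ i, (q i).natDegree ≤ d) ∧ eval q (pencil f g) = 0 := by
  obtain ⟨a, ha⟩ : ∃ a : σ → R, ∀ i, (p i).coeff (d + 1) = a i := ⟨_, fun _ => rfl⟩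
  by_cases ha0 : a = 0
  · refine .inr ⟨p, hp0, fun i =>
      Polynomial.natDegree_le_iff_coeff_eq_zero.mpr fun N hN => ?_, hpz⟩
    rcases (Nat.succ_le_of_lt hN).eq_or_lt with rfl | hN'
    · simp [ha, ha0]
    · exact Polynomial.coeff_eq_zero_of_natDegree_lt ((hp i).trans_lt hN')
  have hga : eval a g = 0 := by
    simpa [coeff_eval_pencil_two_mul_add_one hf hg hp, ha] using
      congrArg (Polynomial.coeff · (2 * (d + 1) + 1)) hpz
  by_cases hfa : eval a f = 0
  · exact .inl ⟨a, ha0, hfa, hga⟩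
  obtain ⟨Q, hQ⟩ : ∃ Q : QuadraticMap R[X] (σ → R[X]) R[X], ∀ x, Q x = eval x (pencil f g) :=
    ⟨_, (hf.pencil hg).toQuadraticMap_apply⟩
  rw [← hQ] at hpz
  have hQa : Q (Polynomial.C ∘ a) = Polynomial.C (eval a f) := by
    rw [hQ, eval_C_comp_pencil, hga, map_zero, mul_zero, add_zero]
  refine .inr
    ⟨Q (Polynomial.C ∘ a) • p - QuadraticMap.polar Q p (Polynomial.C ∘ a) • (Polynomial.C ∘ a),
      Q.smul_sub_polar_smul_ne_zero hpz hp0 (by simpa [hQa] using hfa), fun i => ?_,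
      by rw [← hQ]; exact Q.map_smul_sub_polar_smul hpz _⟩
  refine Polynomial.natDegree_le_iff_coeff_eq_zero.mpr fun N hN => ?_
  simp only [hQa, Pi.sub_apply, Pi.smul_apply, Function.comp_apply, smul_eq_mul,
    Polynomial.coeff_sub, Polynomial.coeff_C_mul, Polynomial.coeff_mul_C,
    coeff_polar_pencil hf hg hQ hp hpz ha hga hN]
  rcases (Nat.succ_le_of_lt hN).eq_or_lt with rfl | hN'
  · simp [ha]
  · simp [Polynomial.coeff_eq_zero_of_natDegree_lt ((hp i).trans_lt hN'), hN'.ne']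

theorem exists_common_zero_of_eval_pencil_eq_zero (hf : f.IsHomogeneous 2)
    (hg : g.IsHomogeneous 2) :
    ∀ {d : ℕ} {p : σ → R[X]}, p ≠ 0 → (∀ i, (p i).natDegree ≤ d) → eval p (pencil f g) = 0 →
      ∃ y : σ → R, y ≠ 0 ∧ eval y f = 0 ∧ eval y g = 0
  | 0, p, hp0, hp, hpz => by
    obtain ⟨y, rfl⟩ : ∃ y : σ → R, p = Polynomial.C ∘ y :=
      ⟨fun i => (p i).coeff 0, by funext i; exact Polynomial.eq_C_of_natDegree_le_zero (hp i)⟩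
    rw [eval_C_comp_pencil] at hpz
    refine ⟨y, fun hy => hp0 (by simp [hy]), ?_, ?_⟩
    · simpa using congrArg (Polynomial.coeff · 0) hpz
    · simpa using congrArg (Polynomial.coeff · 1) hpz
  | d + 1, p, hp0, hp, hpz =>
    (exists_common_zero_or_lower_degree_zero hf hg hp0 hp hpz).elim id
      fun ⟨_, hq0, hq, hqz⟩ => exists_common_zero_of_eval_pencil_eq_zero hf hg hq0 hq hqz

theorem exists_eval_pencil_eq_zero_iff [Finite σ] (hf : f.IsHomogeneous 2)
    (hg : g.IsHomogeneous 2) :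
    (∃ p : σ → R[X], p ≠ 0 ∧ eval p (pencil f g) = 0) ↔
      ∃ y : σ → R, y ≠ 0 ∧ eval y f = 0 ∧ eval y g = 0 := by
  refine ⟨fun ⟨p, hp0, hpz⟩ => ?_, fun ⟨y, hy0, hfy, hgy⟩ => ⟨Polynomial.C ∘ y, ?_, ?_⟩⟩
  · obtain ⟨d, hd⟩ := Finite.exists_le fun i => (p i).natDegree
    exact exists_common_zero_of_eval_pencil_eq_zero hf hg hp0 hd hpz
  · exact fun h => hy0 (by funext i; simpa using congrFun h i)
  · simp [eval_C_comp_pencil, hfy, hgy]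

end Pencil

end MvPolynomial

theorem amer_brumer_general (F : Type*) [Field F] (n : ℕ)
    (f g : MvPolynomial (Fin n) F) (hf : f.IsHomogeneous 2) (hg : g.IsHomogeneous 2) :
    (∃ x : Fin n → RatFunc F, x ≠ 0 ∧
        eval x (map (algebraMap F (RatFunc F)) f
          + C RatFunc.X * map (algebraMap F (RatFunc F)) g) = 0) ↔
    (∃ y : Fin n → F, y ≠ 0 ∧ eval y f = 0 ∧ eval y g = 0) := by
  have hmap : map (algebraMap F[X] (RatFunc F)) (pencil f g) =
      map (algebraMap F (RatFunc F)) f + C RatFunc.X * map (algebraMap F (RatFunc F)) g := by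
    simp [pencil, map_map, RatFunc.algebraMap_X]
  rw [← hmap, (hf.pencil hg).exists_eval_map_algebraMap_eq_zero_iff]
  exact exists_eval_pencil_eq_zero_iff hf hg

/-- **Amer–Brumer**: for two quadratic forms `f`, `g` in the same `n` variables over a field
`F` of characteristic different from 2, the quadratic form `f + t·g` over the rational
function field `F(t)` has a nontrivial zero in `F(t)ⁿ` if and only if `f` and `g` have a
common nontrivial zero in `Fⁿ`. -/
theorem amer_brumer (F : Type*) [Field F] (hchar : ringChar F ≠ 2) (n : ℕ)
    (f g : MvPolynomial (Fin n) F) (hf : f.IsHomogeneous 2) (hg : g.IsHomogeneous 2) :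
    (∃ x : Fin n → RatFunc F, x ≠ 0 ∧
        eval x (map (algebraMap F (RatFunc F)) f
          + C RatFunc.X * map (algebraMap F (RatFunc F)) g) = 0) ↔
    (∃ y : Fin n → F, y ≠ 0 ∧ eval y f = 0 ∧ eval y g = 0) :=
  amer_brumer_general F n f g hf hg
end

section
/- Let K = ℂ((u))((v)) be the field of iterated formal Laurent series over the complex numbers. Then the diagonal cubic form x₀³ + u·x₁³ + u²·x₂³ + v·x₃³ + vu·x₄³ + vu²·x₅³ + v²·x₆³ + v²u·x₇³ + v²u²·x₈³ has no nontrivial zero in K⁹: its only zero is (0, …, 0). -/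
/-!
Springer's argument for diagonal forms, applied twice. Let `q = ∑ aᵢ xᵢ^d` be anisotropic over a
domain `R`. If the entries of a nonzero vector `x` over `R⸨X⸩` have least order `m`, the
coefficient of `X^(d m)` in `q(x)` is `q` evaluated at the coefficients of `X^m`, hence nonzero:
`q(x)` has order divisible by `d`. So in `∑_{j<d} X^j q(x⁽ʲ⁾)` the nonzero summands have orders in
distinct classes mod `d` and cannot cancel, and this form is again anisotropic. Starting from `x³`
over `ℂ`, one step gives `⟨1, u, u²⟩` over `ℂ((u))` and a second one the form of the theorem.
-/

/-- The element `u` of `K = ℂ((u))((v))`: the Laurent series variable of the inner field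
`ℂ((u))`, viewed as a constant Laurent series in `v`. -/
noncomputable def uElt : LaurentSeries (LaurentSeries ℂ) :=
  HahnSeries.C (HahnSeries.single (1 : ℤ) (1 : ℂ))

/-- The element `v` of `K = ℂ((u))((v))`: the Laurent series variable of the outer field. -/
noncomputable def vElt : LaurentSeries (LaurentSeries ℂ) :=
  HahnSeries.single (1 : ℤ) (1 : LaurentSeries ℂ)

open Finset HahnSeries

section DiagonalForm

variable {ι R : Type*} [Fintype ι] [CommSemiring R]

def diagonalForm (d : ℕ) (a x : ι → R) : R := ∑ i, a i * x i ^ d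

def DiagonalForm.Anisotropic (d : ℕ) (a : ι → R) : Prop :=
  ∀ x, diagonalForm d a x = 0 → x = 0

theorem DiagonalForm.anisotropic_one [NoZeroDivisors R] {d : ℕ} (hd : d ≠ 0) :
    DiagonalForm.Anisotropic d (fun _ : Unit ↦ (1 : R)) := by
  intro x hx
  funext i
  simpa [diagonalForm, hd] using hx

end DiagonalForm

namespace HahnSeries

variable {Γ R ι : Type*} [LinearOrder Γ] [Fintype ι]

theorem eq_zero_of_sum_eq_zero_of_injOn_orderTop [AddCommMonoid R] {f : ι → HahnSeries Γ R}
    (hinj : Set.InjOn (fun i ↦ (f i).orderTop) {i | f i ≠ 0}) (hsum : ∑ i, f i = 0) :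
    f = 0 := by
  classical
  by_contra hf
  obtain ⟨i, hi⟩ := Function.ne_iff.mp hf
  obtain ⟨i₀, hi₀, hmin⟩ := (Finset.univ.filter (f · ≠ 0)).exists_min_image
    (fun i ↦ (f i).orderTop) ⟨i, by simpa using hi⟩
  simp only [Finset.mem_filter, Finset.mem_univ, true_and] at hi₀ hmin
  obtain ⟨g, hg⟩ := WithTop.ne_top_iff_exists.mp (orderTop_ne_top.mpr hi₀)
  have hcoeff : (∑ i, f i).coeff g = (f i₀).coeff g := by
    rw [coeff_sum, Finset.sum_eq_single i₀ (fun j _ hj ↦ ?_) (by simp)]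
    by_cases h : f j = 0
    · simp [h]
    refine coeff_eq_zero_of_lt_orderTop (hg ▸ lt_of_le_of_ne (hmin j h) fun heq ↦ hj ?_)
    exact hinj h hi₀ heq.symm
  exact coeff_orderTop_ne hg.symm (hcoeff ▸ hsum ▸ coeff_zero)

variable [AddCommMonoid Γ] [IsOrderedCancelAddMonoid Γ]

theorem coeff_mul_add_of_le_orderTop [NonUnitalNonAssocSemiring R] {x y : HahnSeries Γ R}
    {a b : Γ} (ha : a ≤ x.orderTop) (hb : b ≤ y.orderTop) :
    (x * y).coeff (a + b) = x.coeff a * y.coeff b := by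
  rw [coeff_mul, Finset.sum_eq_single (a, b)]
  · rintro ⟨i, j⟩ hij hne
    rw [Finset.mem_antidiagonal] at hij
    obtain ⟨hi, hj, hsum⟩ := hij
    have hai : a ≤ i := WithTop.coe_le_coe.mp (ha.trans (orderTop_le_of_coeff_ne_zero hi))
    have hbj : b ≤ j := WithTop.coe_le_coe.mp (hb.trans (orderTop_le_of_coeff_ne_zero hj))
    obtain rfl : a = i := by
      by_contra h
      exact (add_lt_add_of_lt_of_le (lt_of_le_of_ne hai h) hbj).ne' hsum
    obtain rfl : j = b := add_left_cancel hsum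
    exact absurd rfl hne
  · intro hab
    simp only [Finset.mem_antidiagonal, mem_support, not_and_or, not_not] at hab
    rcases hab with h | h | h
    · rw [h, zero_mul]
    · rw [h, mul_zero]
    · exact (h trivial).elim

theorem nsmul_le_orderTop_pow [Semiring R] {x : HahnSeries Γ R} {a : Γ}
    (ha : a ≤ x.orderTop) (n : ℕ) : ((n • a : Γ) : WithTop Γ) ≤ (x ^ n).orderTop := by
  rw [WithTop.coe_nsmul]
  exact (nsmul_le_nsmul_right ha n).trans orderTop_nsmul_le_orderTop_pow

theorem coeff_pow_nsmul_of_le_orderTop [Semiring R] {x : HahnSeries Γ R} {a : Γ}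
    (ha : a ≤ x.orderTop) (n : ℕ) : (x ^ n).coeff (n • a) = x.coeff a ^ n := by
  induction n with
  | zero => simp
  | succ n ih =>
    rw [pow_succ, succ_nsmul, coeff_mul_add_of_le_orderTop (nsmul_le_orderTop_pow ha n) ha, ih,
      pow_succ]


theorem coeff_diagonalForm_C_of_le_orderTop [CommSemiring R] {d : ℕ}
    {a : ι → R} {x : ι → HahnSeries Γ R} {m : Γ} (hm : ∀ i, m ≤ (x i).orderTop) :
    (diagonalForm d (C ∘ a) x).coeff (d • m) = diagonalForm d a (fun i ↦ (x i).coeff m) := by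
  simp only [diagonalForm, coeff_sum, Function.comp_apply, C_mul_eq_smul, coeff_smul,
    smul_eq_mul, coeff_pow_nsmul_of_le_orderTop (hm _)]

theorem le_orderTop_diagonalForm_C [CommSemiring R] {d : ℕ}
    {a : ι → R} {x : ι → HahnSeries Γ R} {m : Γ} (hm : ∀ i, m ≤ (x i).orderTop) :
    ((d • m : Γ) : WithTop Γ) ≤ (diagonalForm d (C ∘ a) x).orderTop := by
  refine le_orderTop_iff_forall.mpr fun k hk ↦ ?_
  simp only [diagonalForm, coeff_sum, Function.comp_apply, C_mul_eq_smul, coeff_smul]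
  refine Finset.sum_eq_zero fun i _ ↦ ?_
  rw [coeff_eq_zero_of_lt_orderTop (hk.trans_le (nsmul_le_orderTop_pow (hm i) d)), smul_zero]

end HahnSeries

theorem Fin.eq_of_natCast_add_mul_eq {d : ℕ} {j j' : Fin d} {m m' : ℤ}
    (h : (j : ℤ) + d * m = j' + d * m') : j = j' := by
  have hmod := congrArg (· % (d : ℤ)) h
  simp only [Int.add_mul_emod_self_left] at hmod
  rw [Int.emod_eq_of_lt (by omega) (by omega), Int.emod_eq_of_lt (by omega) (by omega)] at hmod
  exact Fin.ext (by exact_mod_cast hmod)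

namespace DiagonalForm.Anisotropic

variable {ι R : Type*} [Fintype ι]

theorem exists_orderTop_diagonalForm_C {Γ : Type*} [AddCommMonoid Γ] [LinearOrder Γ]
    [IsOrderedCancelAddMonoid Γ] [CommSemiring R] {d : ℕ} {a : ι → R} (ha : Anisotropic d a)
    {x : ι → HahnSeries Γ R} (hx : x ≠ 0) :
    ∃ m : Γ, (diagonalForm d (C ∘ a) x).orderTop = (d • m : Γ) := by
  classical
  obtain ⟨i, hi⟩ := Function.ne_iff.mp hx
  obtain ⟨i₀, hi₀, hmin⟩ := (Finset.univ.filter (x · ≠ 0)).exists_min_image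
    (fun i ↦ (x i).orderTop) ⟨i, by simpa using hi⟩
  simp only [Finset.mem_filter, Finset.mem_univ, true_and] at hi₀ hmin
  obtain ⟨m, hm⟩ := WithTop.ne_top_iff_exists.mp (orderTop_ne_top.mpr hi₀)
  have hle : ∀ i, m ≤ (x i).orderTop := fun i ↦ by
    by_cases h : x i = 0
    · simp [h]
    · exact hm ▸ hmin i h
  have hlead : (fun i ↦ (x i).coeff m) ≠ 0 :=
    Function.ne_iff.mpr ⟨i₀, coeff_orderTop_ne hm.symm⟩
  refine ⟨m, le_antisymm (orderTop_le_of_coeff_ne_zero ?_) (le_orderTop_diagonalForm_C hle)⟩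
  rw [coeff_diagonalForm_C_of_le_orderTop hle]
  exact fun h ↦ hlead (ha _ h)

open LaurentSeries in
theorem laurentSeries [CommRing R] [IsDomain R] {d : ℕ} {a : ι → R} (ha : Anisotropic d a) :
    Anisotropic d (fun p : Fin d × ι ↦ (single (p.1 : ℤ) (a p.2) : R⸨X⸩)) := by
  intro x hx
  set Q : Fin d → R⸨X⸩ := fun j ↦ diagonalForm d (C ∘ a) (fun i ↦ x (j, i))
  have hsum : ∑ j : Fin d, single (j : ℤ) 1 * Q j = 0 := by
    rw [← hx]
    simp only [Q, diagonalForm, Fintype.sum_prod_type, Finset.mul_sum, ← mul_assoc,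
      Function.comp_apply, C_apply, single_mul_single, add_zero, one_mul]
  have hQ : ∀ j, Q j ≠ 0 → ∃ m : ℤ, (Q j).orderTop = (d • m : ℤ) := fun j hj ↦
    ha.exists_orderTop_diagonalForm_C fun h ↦ hj <| by
      simp [Q, diagonalForm, show ∀ i, x (j, i) = 0 from congrFun h, j.pos.ne']
  have hinj : Set.InjOn (fun j : Fin d ↦ (single (j : ℤ) 1 * Q j).orderTop)
      {j : Fin d | single (j : ℤ) 1 * Q j ≠ 0} := by
    intro j hj j' hj' heq
    obtain ⟨m, hm⟩ := hQ j (right_ne_zero_of_mul hj)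
    obtain ⟨m', hm'⟩ := hQ j' (right_ne_zero_of_mul hj')
    simp only [orderTop_mul, orderTop_single one_ne_zero, hm, hm', ← WithTop.coe_add,
      WithTop.coe_inj, nsmul_eq_mul] at heq
    exact Fin.eq_of_natCast_add_mul_eq heq
  have hcol : ∀ j, (fun i ↦ x (j, i)) = 0 := fun j ↦ by
    have hQj : Q j = 0 := by
      simpa using congrFun (eq_zero_of_sum_eq_zero_of_injOn_orderTop hinj hsum) j
    by_contra h
    obtain ⟨m, hm⟩ := ha.exists_orderTop_diagonalForm_C h
    exact WithTop.coe_ne_top (hm.symm.trans (orderTop_eq_top.mpr hQj))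
  funext ⟨j, i⟩
  exact congrFun (hcol j) i

end DiagonalForm.Anisotropic

theorem vElt_pow_mul_uElt_pow (j k : ℕ) :
    vElt ^ j * uElt ^ k = single (j : ℤ) (single (k : ℤ) (1 : ℂ)) := by
  simp [vElt, uElt, single_pow, C_apply, single_mul_single]

/-- Over `K = ℂ((u))((v))`, the diagonal cubic form with coefficients
`(1, u, u², v, vu, vu², v², v²u, v²u²)` has only the trivial zero. -/
theorem diagonal_cubic_no_nontrivial_zero (x₀ x₁ x₂ x₃ x₄ x₅ x₆ x₇ x₈ :
    LaurentSeries (LaurentSeries ℂ))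
    (h : x₀ ^ 3 + uElt * x₁ ^ 3 + uElt ^ 2 * x₂ ^ 3
        + vElt * x₃ ^ 3 + vElt * uElt * x₄ ^ 3 + vElt * uElt ^ 2 * x₅ ^ 3
        + vElt ^ 2 * x₆ ^ 3 + vElt ^ 2 * uElt * x₇ ^ 3 + vElt ^ 2 * uElt ^ 2 * x₈ ^ 3 = 0) :
    x₀ = 0 ∧ x₁ = 0 ∧ x₂ = 0 ∧ x₃ = 0 ∧ x₄ = 0 ∧ x₅ = 0 ∧ x₆ = 0 ∧ x₇ = 0 ∧ x₈ = 0 := by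
  have hK := (DiagonalForm.anisotropic_one (R := ℂ) three_ne_zero).laurentSeries.laurentSeries
  set y : Fin 3 × (Fin 3 × Unit) → LaurentSeries (LaurentSeries ℂ) :=
    fun p ↦ ![![x₀, x₁, x₂], ![x₃, x₄, x₅], ![x₆, x₇, x₈]] p.1 p.2.1
  have hy0 : y = 0 := hK y <| by
    rw [← h]
    simp only [diagonalForm, ← vElt_pow_mul_uElt_pow, Fintype.sum_prod_type,
      Fin.sum_univ_three, univ_unique, sum_singleton, y, Matrix.cons_val, Fin.val_zero,
      Fin.val_one, Fin.val_two]
    ring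
  simpa [funext_iff, y, Prod.forall, Fin.forall_fin_succ, and_assoc] using hy0
end

section
/- (Lafon) Let K = ℂ((t)) be the field of formal Laurent series over the complex numbers. Then there do not exist elements x, y, u, z of K satisfying simultaneously the two equations x² − t·u² + t = (t²·u² − t)·y² and x² − 2t·u² + t⁻¹ = t·(t²·u² − t)·z². -/
/-!
Let `v` be a `ℤ`-valued additive valuation with `v t = 1` (the `t`-adic order on `ℂ((t))`),
and put `s = t u` and `a = s² - t`. Multiplied by `t`, the equations read
`t x² - t a y² = s² - t²` and `t x² - t² a z² = 2 s² - 1`, and `v (t x²)` is odd (or `⊤`).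
If `v s ≥ 1` then `v a = 1`, so in the second equation both terms on the left have odd valuation
while the right has valuation `0`; by the ultrametric inequality this forces `v (t x²) < 0`.
In the first equation `t a y²` has even valuation and `s² - t²` valuation `≥ 2`, so
`v (t x²) < 0` is impossible. If `v s = m ≤ 0` the two equations swap roles, with `2 m` in
place of `0`.
-/

def OddOrTop (w : WithTop ℤ) : Prop := ∀ n : ℤ, w = n → Odd n

def EvenOrTop (w : WithTop ℤ) : Prop := ∀ n : ℤ, w = n → Even n

theorem oddOrTop_coe {n : ℤ} (h : Odd n) : OddOrTop n := fun _ hm => WithTop.coe_injective hm ▸ h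

theorem evenOrTop_coe {n : ℤ} (h : Even n) : EvenOrTop n :=
  fun _ hm => WithTop.coe_injective hm ▸ h

theorem evenOrTop_two_nsmul (w : WithTop ℤ) : EvenOrTop (2 • w) := by
  rw [two_nsmul]
  induction w using WithTop.recTopCoe with
  | top => intro n h; simp at h
  | coe m => exact WithTop.coe_add m m ▸ evenOrTop_coe ⟨m, rfl⟩

theorem EvenOrTop.add {a b : WithTop ℤ} (ha : EvenOrTop a) (hb : EvenOrTop b) :
    EvenOrTop (a + b) := by
  induction a using WithTop.recTopCoe with
  | top => intro n h; simp at h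
  | coe a =>
    induction b using WithTop.recTopCoe with
    | top => intro n h; simp at h
    | coe b => exact evenOrTop_coe ((ha a rfl).add (hb b rfl))

theorem OddOrTop.add_evenOrTop {a b : WithTop ℤ} (ha : OddOrTop a) (hb : EvenOrTop b) :
    OddOrTop (a + b) := by
  induction a using WithTop.recTopCoe with
  | top => intro n h; simp at h
  | coe a =>
    induction b using WithTop.recTopCoe with
    | top => intro n h; simp at h
    | coe b => exact oddOrTop_coe ((ha a rfl).add_even (hb b rfl))

theorem EvenOrTop.add_oddOrTop {a b : WithTop ℤ} (ha : EvenOrTop a) (hb : OddOrTop b) :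
    OddOrTop (a + b) :=
  add_comm b a ▸ hb.add_evenOrTop ha

theorem OddOrTop.add_oddOrTop {a b : WithTop ℤ} (ha : OddOrTop a) (hb : OddOrTop b) :
    EvenOrTop (a + b) := by
  induction a using WithTop.recTopCoe with
  | top => intro n h; simp at h
  | coe a =>
    induction b using WithTop.recTopCoe with
    | top => intro n h; simp at h
    | coe b => exact evenOrTop_coe ((ha a rfl).add_odd (hb b rfl))

theorem OddOrTop.eq_top_of_evenOrTop {w : WithTop ℤ} (ho : OddOrTop w) (he : EvenOrTop w) :
    w = ⊤ := by
  induction w using WithTop.recTopCoe with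
  | top => rfl
  | coe n => exact absurd (he n rfl) (Int.not_even_iff_odd.2 (ho n rfl))

namespace AddValuation

variable {K : Type*} [Field K] (v : AddValuation K (WithTop ℤ))

theorem evenOrTop_map_sq (x : K) : EvenOrTop (v (x ^ 2)) := by
  rw [v.map_pow]; exact evenOrTop_two_nsmul _

theorem oddOrTop_map_mul_sq {c : K} (hc : OddOrTop (v c)) (x : K) :
    OddOrTop (v (c * x ^ 2)) := by
  rw [v.map_mul]; exact hc.add_evenOrTop (v.evenOrTop_map_sq x)

theorem evenOrTop_map_mul_sq {c : K} (hc : EvenOrTop (v c)) (x : K) :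
    EvenOrTop (v (c * x ^ 2)) := by
  rw [v.map_mul]; exact hc.add (v.evenOrTop_map_sq x)

theorem le_map_two_mul (x : K) : v x ≤ v (2 * x) := by
  simpa [two_mul] using v.map_add x x

theorem lt_of_sub_eq_of_oddOrTop {P Q R : K} (h : P - Q = R) (hP : OddOrTop (v P))
    (hQ : OddOrTop (v Q)) (hR : EvenOrTop (v R)) (hR0 : R ≠ 0) : v P < v R := by
  have hR_ne_of_oddOrTop {X : K} (hX : OddOrTop (v X)) : v X ≠ v R := fun hXR =>
    hR0 ((v.top_iff).1 (hXR ▸ hX.eq_top_of_evenOrTop (hXR ▸ hR)))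
  refine lt_of_le_of_ne (not_lt.1 fun hRP => hR_ne_of_oddOrTop hQ ?_) (hR_ne_of_oddOrTop hP)
  rw [show Q = P - R by rw [← h]; ring, v.map_sub_eq_of_lt_right hRP]

theorem sub_ne_of_evenOrTop {P Q R : K} (hP : OddOrTop (v P)) (hQ : EvenOrTop (v Q))
    (hPR : v P < v R) : P - Q ≠ R := by
  intro h
  have hQP : v Q = v P := by
    rw [show Q = P - R by rw [← h]; ring, v.map_sub_eq_of_lt_left hPR]
  exact hPR.ne_top (hP.eq_top_of_evenOrTop (hQP ▸ hQ))

section Lafon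

variable {t s x y z : K}

theorem lafon_no_point_of_one_le_map (ht : v t = 1) (hs : 1 ≤ v s)
    (E₁ : t * x ^ 2 - t * (s ^ 2 - t) * y ^ 2 = s ^ 2 - t ^ 2)
    (E₂ : t * x ^ 2 - t ^ 2 * (s ^ 2 - t) * z ^ 2 = 2 * s ^ 2 - 1) : False := by
  have hvt : OddOrTop (v t) := ht ▸ oddOrTop_coe odd_one
  have hs2 : 2 ≤ v (s ^ 2) := by
    rw [v.map_pow]; exact (nsmul_le_nsmul_right hs 2).trans' le_rfl
  have ha : OddOrTop (v (s ^ 2 - t)) := by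
    rw [v.map_sub_eq_of_lt_right (ht ▸ hs2.trans_lt' (by decide))]; exact hvt
  have hR : v (2 * s ^ 2 - 1) = 0 := by
    rw [v.map_sub_eq_of_lt_right, v.map_one]
    exact v.map_one ▸ (hs2.trans (v.le_map_two_mul _)).trans_lt' (by decide)
  have hR' : 2 ≤ v (s ^ 2 - t ^ 2) := by
    refine (le_min hs2 ?_).trans (v.map_sub _ _)
    rw [v.map_pow, ht]; rfl
  have hQ : OddOrTop (v (t ^ 2 * (s ^ 2 - t) * z ^ 2)) :=
    v.oddOrTop_map_mul_sq (v.map_mul _ _ ▸ (v.evenOrTop_map_sq t).add_oddOrTop ha) z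
  have hQ' : EvenOrTop (v (t * (s ^ 2 - t) * y ^ 2)) :=
    v.evenOrTop_map_mul_sq (v.map_mul _ _ ▸ hvt.add_oddOrTop ha) y
  have hlt := v.lt_of_sub_eq_of_oddOrTop E₂ (v.oddOrTop_map_mul_sq hvt x) hQ
    (hR ▸ evenOrTop_coe Even.zero) (v.ne_top_iff.1 (by simp [hR]))
  exact v.sub_ne_of_evenOrTop (v.oddOrTop_map_mul_sq hvt x) hQ'
    (hlt.trans_le (hR ▸ hR'.trans' (by decide))) E₁

theorem lafon_no_point_of_map_lt_one (ht : v t = 1) (hs : v s < 1)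
    (E₁ : t * x ^ 2 - t * (s ^ 2 - t) * y ^ 2 = s ^ 2 - t ^ 2)
    (E₂ : t * x ^ 2 - t ^ 2 * (s ^ 2 - t) * z ^ 2 = 2 * s ^ 2 - 1) : False := by
  have hvt : OddOrTop (v t) := ht ▸ oddOrTop_coe odd_one
  obtain ⟨m, hm⟩ := WithTop.ne_top_iff_exists.1 hs.ne_top
  have hm0 : m ≤ 0 := by
    rw [← hm] at hs; exact Int.lt_add_one_iff.1 (WithTop.coe_lt_coe.1 hs)
  have hs2 : v (s ^ 2) = (2 * m : ℤ) := by rw [v.map_pow, ← hm]; norm_cast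
  have ha : EvenOrTop (v (s ^ 2 - t)) := by
    rw [v.map_sub_eq_of_lt_left (by rw [hs2, ht]; exact_mod_cast (show 2 * m < 1 by omega)),
      hs2]
    exact evenOrTop_coe (even_two_mul m)
  have hR : v (s ^ 2 - t ^ 2) = (2 * m : ℤ) := by
    rw [v.map_sub_eq_of_lt_left, hs2]
    rw [hs2, v.map_pow, ht]; exact WithTop.coe_lt_coe.2 (show 2 * m < 2 by omega)
  have hR' : ((2 * m : ℤ) : WithTop ℤ) ≤ v (2 * s ^ 2 - 1) := by
    refine (le_min (hs2 ▸ v.le_map_two_mul _) ?_).trans (v.map_sub _ _)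
    rw [v.map_one]; exact_mod_cast (show 2 * m ≤ 0 by omega)
  have hQ : OddOrTop (v (t * (s ^ 2 - t) * y ^ 2)) :=
    v.oddOrTop_map_mul_sq (v.map_mul _ _ ▸ hvt.add_evenOrTop ha) y
  have hQ' : EvenOrTop (v (t ^ 2 * (s ^ 2 - t) * z ^ 2)) :=
    v.evenOrTop_map_mul_sq (v.map_mul _ _ ▸ (v.evenOrTop_map_sq t).add ha) z
  have hlt := v.lt_of_sub_eq_of_oddOrTop E₁ (v.oddOrTop_map_mul_sq hvt x) hQ
    (hR ▸ evenOrTop_coe (even_two_mul m)) (v.ne_top_iff.1 (hR ▸ WithTop.coe_ne_top))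
  exact v.sub_ne_of_evenOrTop (v.oddOrTop_map_mul_sq hvt x) hQ' (hlt.trans_le (hR ▸ hR')) E₂

theorem lafon_no_point (ht : v t = 1) (u : K)
    (h₁ : x ^ 2 - t * u ^ 2 + t = (t ^ 2 * u ^ 2 - t) * y ^ 2)
    (h₂ : x ^ 2 - 2 * t * u ^ 2 + t⁻¹ = t * (t ^ 2 * u ^ 2 - t) * z ^ 2) : False := by
  have ht0 : t ≠ 0 := v.ne_top_iff.1 (by simp [ht])
  have E₁ : t * x ^ 2 - t * ((t * u) ^ 2 - t) * y ^ 2 = (t * u) ^ 2 - t ^ 2 := by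
    linear_combination t * h₁
  have E₂ : t * x ^ 2 - t ^ 2 * ((t * u) ^ 2 - t) * z ^ 2 = 2 * (t * u) ^ 2 - 1 := by
    linear_combination t * h₂ - mul_inv_cancel₀ ht0
  rcases le_or_gt 1 (v (t * u)) with hs | hs
  · exact v.lafon_no_point_of_one_le_map ht hs E₁ E₂
  · exact v.lafon_no_point_of_map_lt_one ht hs E₁ E₂

end Lafon

end AddValuation

/-- **Lafon**: over `K = ℂ((t))` there are no elements `x, y, u, z` satisfying both
`x² − t·u² + t = (t²·u² − t)·y²` and `x² − 2t·u² + t⁻¹ = t·(t²·u² − t)·z²`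
(an Enriques surface over `ℂ((t))` with no rational point). -/
theorem lafon_enriques_no_point :
    ¬ ∃ x y u z : LaurentSeries ℂ,
      (x ^ 2 - (HahnSeries.single (1 : ℤ) (1 : ℂ)) * u ^ 2
          + (HahnSeries.single (1 : ℤ) (1 : ℂ))
        = ((HahnSeries.single (1 : ℤ) (1 : ℂ)) ^ 2 * u ^ 2
            - (HahnSeries.single (1 : ℤ) (1 : ℂ))) * y ^ 2) ∧
      (x ^ 2 - 2 * (HahnSeries.single (1 : ℤ) (1 : ℂ)) * u ^ 2
          + (HahnSeries.single (1 : ℤ) (1 : ℂ))⁻¹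
        = (HahnSeries.single (1 : ℤ) (1 : ℂ))
            * ((HahnSeries.single (1 : ℤ) (1 : ℂ)) ^ 2 * u ^ 2
              - (HahnSeries.single (1 : ℤ) (1 : ℂ))) * z ^ 2) := by
  rintro ⟨x, y, u, z, h₁, h₂⟩
  have ht : HahnSeries.addVal ℤ ℂ (HahnSeries.single 1 1) = 1 := by
    rw [HahnSeries.addVal_apply, HahnSeries.orderTop_single one_ne_zero]; rfl
  exact (HahnSeries.addVal ℤ ℂ).lafon_no_point ht u h₁ h₂
end

section
/- Let p be an odd prime, let a ∈ ℤ_p be a unit whose reduction modulo p is not a square in the residue field, let n, m ≥ 0 be integers, and let α, β ∈ ℤ_p be units such that α·β is a square in ℤ_p. Then the quadratic form p^{2n+1}·α·X₀² − a·p^{2m+1}·β·X₁² + X₂² − a·(p^{2n+1}·α + p^{2m+1}·β + 1)·X₃² has no nontrivial zero over ℚ_p: its only zero in ℚ_p⁴ is (0, 0, 0, 0). -/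
/-!
If `b ∈ ℤ_p` has non-square residue, then `‖x² - b y²‖ = max ‖x‖ ‖y‖ ^ 2`, so the binary form
`x² - b y²` is anisotropic and all its nonzero values have even valuation. Multiplying the
equation by `α` and writing `αβ = c²` turns it into
`p (Y₀² - a Y₁²) = -α (X₂² - a w X₃²)` with `w = p^{2n+1} α + p^{2m+1} β + 1 ≡ 1 mod p`:
the left side has odd valuation and the right side even valuation, so both vanish.
-/

namespace PadicInt

variable {p : ℕ} [Fact p.Prime]

theorem isUnit_sq_sub_of_not_isSquare_toZMod {b : ℤ_[p]} (hb : ¬ IsSquare (toZMod b))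
    (z : ℤ_[p]) : IsUnit (z ^ 2 - b) := by
  by_contra h
  have hz : toZMod (z ^ 2 - b) = 0 := by
    rw [← RingHom.mem_ker, ker_toZMod]
    exact (IsLocalRing.mem_maximalIdeal _).mpr h
  rw [map_sub, map_pow, sub_eq_zero] at hz
  exact hb ⟨toZMod z, by rw [← hz, sq]⟩

end PadicInt

namespace Padic

variable {p : ℕ} [Fact p.Prime]

theorem norm_sq_sub_of_not_isSquare_toZMod {b : ℤ_[p]} (hb : ¬ IsSquare (PadicInt.toZMod b))
    (z : ℚ_[p]) : ‖z ^ 2 - b‖ = max 1 ‖z‖ ^ 2 := by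
  rcases le_or_gt ‖z‖ 1 with hz | hz
  · obtain ⟨z, rfl⟩ : ∃ z' : ℤ_[p], (z' : ℚ_[p]) = z := ⟨⟨z, hz⟩, rfl⟩
    have hunit := PadicInt.isUnit_sq_sub_of_not_isSquare_toZMod hb z
    rw [PadicInt.isUnit_iff, ← PadicInt.padic_norm_e_of_padicInt, PadicInt.coe_sub,
      PadicInt.coe_pow] at hunit
    rwa [max_eq_left hz, one_pow]
  · have hb1 : ‖(b : ℚ_[p])‖ ≤ 1 := by
      rw [PadicInt.padic_norm_e_of_padicInt]; exact PadicInt.norm_le_one b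
    have hlt : ‖-(b : ℚ_[p])‖ < ‖z ^ 2‖ := by
      rw [norm_neg, norm_pow]; nlinarith
    rw [sub_eq_add_neg, IsUltrametricDist.norm_add_eq_max_of_norm_ne_norm hlt.ne',
      max_eq_left hlt.le, max_eq_right hz.le, norm_pow]

theorem norm_sq_sub_mul_sq_of_not_isSquare_toZMod {b : ℤ_[p]}
    (hb : ¬ IsSquare (PadicInt.toZMod b)) (x y : ℚ_[p]) :
    ‖x ^ 2 - b * y ^ 2‖ = max ‖x‖ ‖y‖ ^ 2 := by
  rcases eq_or_ne y 0 with rfl | hy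
  · simp
  · have hfactor : x ^ 2 - b * y ^ 2 = ((x / y) ^ 2 - b) * y ^ 2 := by field_simp
    rw [hfactor, norm_mul, norm_sq_sub_of_not_isSquare_toZMod hb, norm_pow, ← mul_pow,
      max_mul_of_nonneg _ _ (norm_nonneg y), one_mul, norm_div,
      div_mul_cancel₀ _ (norm_ne_zero_iff.mpr hy), max_comm]

theorem inv_p_mul_norm_sq_ne_norm_sq {x : ℚ_[p]} (hx : x ≠ 0) (y : ℚ_[p]) :
    (p : ℝ)⁻¹ * ‖x‖ ^ 2 ≠ ‖y‖ ^ 2 := by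
  have hp : (1 : ℝ) < p := mod_cast (Fact.out : p.Prime).one_lt
  rcases eq_or_ne y 0 with rfl | hy
  · simp [hx, (Fact.out : p.Prime).ne_zero]
  · rw [norm_eq_zpow_neg_valuation hx, norm_eq_zpow_neg_valuation hy, ← zpow_neg_one,
      ← zpow_natCast, ← zpow_natCast, ← zpow_mul, ← zpow_mul, ← zpow_add₀ (by positivity)]
    intro h
    have := zpow_right_injective₀ (by positivity) hp.ne' h
    omega

theorem eq_zero_of_p_mul_sq_sub_mul_sq_eq {a b : ℤ_[p]}
    (ha : ¬ IsSquare (PadicInt.toZMod a)) (hb : ¬ IsSquare (PadicInt.toZMod b))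
    {u : ℚ_[p]} (hu : ‖u‖ = 1) {x₀ x₁ x₂ x₃ : ℚ_[p]}
    (h : p * (x₀ ^ 2 - a * x₁ ^ 2) = u * (x₂ ^ 2 - b * x₃ ^ 2)) :
    x₀ = 0 ∧ x₁ = 0 ∧ x₂ = 0 ∧ x₃ = 0 := by
  have hnorm := congrArg norm h
  rw [norm_mul, norm_mul, norm_p, hu, one_mul, norm_sq_sub_mul_sq_of_not_isSquare_toZMod ha,
    norm_sq_sub_mul_sq_of_not_isSquare_toZMod hb] at hnorm
  obtain ⟨s, hs⟩ : ∃ s : ℚ_[p], max ‖x₀‖ ‖x₁‖ = ‖s‖ :=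
    (max_choice ‖x₀‖ ‖x₁‖).elim (⟨_, ·⟩) (⟨_, ·⟩)
  obtain ⟨t, ht⟩ : ∃ t : ℚ_[p], max ‖x₂‖ ‖x₃‖ = ‖t‖ :=
    (max_choice ‖x₂‖ ‖x₃‖).elim (⟨_, ·⟩) (⟨_, ·⟩)
  rw [hs, ht] at hnorm
  have hs0 : s = 0 := by_contra fun hs0 => inv_p_mul_norm_sq_ne_norm_sq hs0 t hnorm
  rw [hs0, norm_zero] at hs hnorm
  rw [zero_pow two_ne_zero, mul_zero, eq_comm, sq_eq_zero_iff, norm_eq_zero] at hnorm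
  rw [hnorm, norm_zero] at ht
  have h01 := max_le_iff.mp hs.le
  have h23 := max_le_iff.mp ht.le
  simp only [norm_le_zero_iff] at h01 h23
  exact ⟨h01.1, h01.2, h23.1, h23.2⟩
  
end Padic

theorem quadric_fiber_no_point_general (p : ℕ) [Fact p.Prime]
    (a : ℤ_[p]) (hns : ¬ IsSquare (PadicInt.toZMod a))
    (n m : ℕ) (α β : ℤ_[p]) (hα : IsUnit α) (hβ : IsUnit β) (hαβ : IsSquare (α * β))
    (X₀ X₁ X₂ X₃ : ℚ_[p])
    (h : (p : ℚ_[p]) ^ (2 * n + 1) * (α : ℚ_[p]) * X₀ ^ 2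
        - (a : ℚ_[p]) * (p : ℚ_[p]) ^ (2 * m + 1) * (β : ℚ_[p]) * X₁ ^ 2
        + X₂ ^ 2
        - (a : ℚ_[p]) * ((p : ℚ_[p]) ^ (2 * n + 1) * (α : ℚ_[p])
            + (p : ℚ_[p]) ^ (2 * m + 1) * (β : ℚ_[p]) + 1) * X₃ ^ 2 = 0) :
    X₀ = 0 ∧ X₁ = 0 ∧ X₂ = 0 ∧ X₃ = 0 := by
  obtain ⟨c, hc⟩ := hαβ
  have hc_unit : IsUnit c := isUnit_of_mul_isUnit_left (hc ▸ hα.mul hβ)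
  set w : ℤ_[p] := p ^ (2 * n + 1) * α + p ^ (2 * m + 1) * β + 1
  have haw : ¬ IsSquare (PadicInt.toZMod (a * w)) := by simpa [w] using hns
  have hform : (p : ℚ_[p]) * ((α * p ^ n * X₀) ^ 2 - a * (c * p ^ m * X₁) ^ 2)
      = -α * (X₂ ^ 2 - (a * w : ℤ_[p]) * X₃ ^ 2) := by
    have hcQ : (α : ℚ_[p]) * β = c * c := mod_cast congrArg ((↑) : ℤ_[p] → ℚ_[p]) hc
    simp only [w]
    push_cast
    linear_combination (α : ℚ_[p]) * h + (a : ℚ_[p]) * (p : ℚ_[p]) ^ (2 * m + 1) * X₁ ^ 2 * hcQ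
  have hnorm : ‖-(α : ℚ_[p])‖ = 1 := by
    rw [norm_neg, PadicInt.padic_norm_e_of_padicInt, ← PadicInt.isUnit_iff]; exact hα
  obtain ⟨h₀, h₁, h₂, h₃⟩ := Padic.eq_zero_of_p_mul_sq_sub_mul_sq_eq hns haw hnorm hform
  have hp : (p : ℚ_[p]) ≠ 0 := mod_cast (Fact.out : p.Prime).ne_zero
  exact ⟨by simpa [hα.ne_zero, hp] using h₀, by simpa [hc_unit.ne_zero, hp] using h₁, h₂, h₃⟩

/-- Over `ℚ_p` (`p` an odd prime), for `a ∈ ℤ_p` a unit which is not a square modulo `p`,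
`n, m ≥ 0`, and units `α, β ∈ ℤ_p` with `α·β` a square in `ℤ_p`, the quadratic form
`p^{2n+1}·α·X₀² − a·p^{2m+1}·β·X₁² + X₂² − a·(p^{2n+1}·α + p^{2m+1}·β + 1)·X₃²`
has only the trivial zero in `ℚ_p⁴`. -/
theorem quadric_fiber_no_point (p : ℕ) [Fact p.Prime] (hodd : p ≠ 2)
    (a : ℤ_[p]) (ha : IsUnit a) (hns : ¬ IsSquare (PadicInt.toZMod a))
    (n m : ℕ) (α β : ℤ_[p]) (hα : IsUnit α) (hβ : IsUnit β) (hαβ : IsSquare (α * β))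
    (X₀ X₁ X₂ X₃ : ℚ_[p])
    (h : (p : ℚ_[p]) ^ (2 * n + 1) * (α : ℚ_[p]) * X₀ ^ 2
        - (a : ℚ_[p]) * (p : ℚ_[p]) ^ (2 * m + 1) * (β : ℚ_[p]) * X₁ ^ 2
        + X₂ ^ 2
        - (a : ℚ_[p]) * ((p : ℚ_[p]) ^ (2 * n + 1) * (α : ℚ_[p])
            + (p : ℚ_[p]) ^ (2 * m + 1) * (β : ℚ_[p]) + 1) * X₃ ^ 2 = 0) :
    X₀ = 0 ∧ X₁ = 0 ∧ X₂ = 0 ∧ X₃ = 0 :=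
  quadric_fiber_no_point_general p a hns n m α β hα hβ hαβ X₀ X₁ X₂ X₃ h
end
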